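/- For p, q > 1 satisfying (i) 2 + 1/p + 1/p² ≤ 5/p + 1/q < 3 + 1/p² and (ii) ε(p,q) = 20 − 42/p + 6/q + 21/p² − 2/q² − 20/(pq) + 9/(p²q) − 3/p³ − 1/(p³q) > 0, the function Δ_{p,q} is strictly convex on (0,1), where Δ_{p,q}(r) = (E_{p,q}(r) − (r')^p K_{p,q}(r))/r^p − (E_{p,q}(r') − r^p K_{p,q}(r'))/(r')^p and r' = (1−r^p)^{1/p}. -/

import Mathlib

open Real Set Filter Topology

/-- Gaussian hypergeometric function `F(a,b;c;z)` as a power series. -/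
noncomputable def hypF (a b c z : ℝ) : ℝ :=
  ∑' n : ℕ, ((ascPochhammer ℝ n).eval a * (ascPochhammer ℝ n).eval b /
    ((ascPochhammer ℝ n).eval c * (n.factorial : ℝ))) * z ^ n

/-- Generalized π: `π_{p,q} = (2/q) B(1-1/p, 1/q)` with `B(x,y) = Γ(x)Γ(y)/Γ(x+y)`. -/
noncomputable def piGen (p q : ℝ) : ℝ :=
  (2 / q) * (Real.Gamma (1 - 1/p) * Real.Gamma (1/q) / Real.Gamma (1 - 1/p + 1/q))

/-- Generalized complete (p,q)-elliptic integral of the first kind. -/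
noncomputable def Kgen (p q r : ℝ) : ℝ :=
  (piGen p q / 2) * hypF (1/q) (1 - 1/p) (1 - 1/p + 1/q) (r ^ p)

/-- Generalized complete (p,q)-elliptic integral of the second kind. -/
noncomputable def Egen (p q r : ℝ) : ℝ :=
  (piGen p q / 2) * hypF (1/q) (-(1/p)) (1 - 1/p + 1/q) (r ^ p)

/-- The function `Δ_{p,q}` with `r' = (1-r^p)^{1/p}`. -/
noncomputable def DeltaGen (p q r : ℝ) : ℝ :=
  (Egen p q r - ((1 - r ^ p) ^ (1/p)) ^ p * Kgen p q r) / r ^ p -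
  (Egen p q ((1 - r ^ p) ^ (1/p)) - r ^ p * Kgen p q ((1 - r ^ p) ^ (1/p))) /
    ((1 - r ^ p) ^ (1/p)) ^ p

/-!
Put `a = 1/q` and `b = 1 - 1/p`. The contiguous relation
`F(a, b-1; a+b; z) - (1-z) F(a, b; a+b; z) = b/(a+b) · z · F(a, b; a+b+1; z)` turns `Δ_{p,q}(r)`
into a positive multiple of `g(r^p) - g(1 - r^p)`, where `g = F(a, b; a+b+1; ·)` has positive
Taylor coefficients `cₙ`. With `x = r^p`, the second derivative in `r` is a positive multiple of
`h(x) + h(1-x) - p g''(1-x)`, where `h(y) = p y g''(y) + (p-1) g'(y)`. The right half of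
condition (i) makes the Taylor coefficients of `p g''` at most those of `h` from degree 2 on,
and condition (ii) is equivalent to `3 p c₃ < (p-1)(c₁ + c₂)`, which makes the remaining
low-degree part positive.
-/

lemma StrictConvexOn.const_mul {s : Set ℝ} {f : ℝ → ℝ} {C : ℝ} (hf : StrictConvexOn ℝ s f)
    (hC : 0 < C) : StrictConvexOn ℝ s fun x ↦ C * f x := by
  refine ⟨hf.1, fun x hx y hy hxy a b ha hb hab ↦ ?_⟩
  have h := mul_lt_mul_of_pos_left (hf.2 hx hy hxy ha hb hab) hC
  simp only [smul_eq_mul] at h ⊢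
  linarith

lemma strictConvexOn_of_hasDerivAt2_pos {D : Set ℝ} (hD : Convex ℝ D) (hDo : IsOpen D)
    {f f' f'' : ℝ → ℝ} (hf : ∀ x ∈ D, HasDerivAt f (f' x) x)
    (hf' : ∀ x ∈ D, HasDerivAt f' (f'' x) x) (hpos : ∀ x ∈ D, 0 < f'' x) :
    StrictConvexOn ℝ D f := by
  refine strictConvexOn_of_deriv2_pos' hD (fun x hx ↦ (hf x hx).continuousAt.continuousWithinAt)
    fun x hx ↦ ?_
  have hderiv : deriv f =ᶠ[𝓝 x] f' :=
    Filter.eventually_of_mem (hDo.mem_nhds hx) fun y hy ↦ (hf y hy).deriv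
  rw [Function.iterate_succ_apply', Function.iterate_one, hderiv.deriv_eq, (hf' x hx).deriv]
  exact hpos x hx

lemma abs_lt_one_of_mem_Ioo {y : ℝ} (hy : y ∈ Ioo 0 1) : |y| < 1 ∧ |1 - y| < 1 :=
  ⟨abs_lt.2 ⟨by linarith [hy.1], hy.2⟩, abs_lt.2 ⟨by linarith [hy.2], by linarith [hy.1]⟩⟩

lemma rpow_mem_Ioo_zero_one {p s : ℝ} (hp : 0 < p) (hs : s ∈ Ioo 0 1) : s ^ p ∈ Ioo 0 1 :=
  ⟨rpow_pos_of_pos hs.1 p, rpow_lt_one hs.1.le hs.2 hp⟩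

section PowerSeries

variable {c : ℕ → ℝ} {M x : ℝ}

/-- The `k`-th termwise derivative of `∑ cₙ xⁿ`, reindexed to start at `x⁰`. -/
noncomputable def iterDerivSeries (c : ℕ → ℝ) (k : ℕ) (x : ℝ) : ℝ :=
  ∑' n, c (n + k) * (n + k).descFactorial k * x ^ n

lemma iterDerivSeries_zero (c : ℕ → ℝ) (x : ℝ) :
    iterDerivSeries c 0 x = ∑' n, c n * x ^ n := by
  simp [iterDerivSeries]

lemma summable_iterDerivSeries (hc : ∀ n, |c n| ≤ M) (k : ℕ) (hx : |x| < 1) :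
    Summable fun n ↦ c (n + k) * (n + k).descFactorial k * x ^ n := by
  refine .of_norm_bounded ((summable_descFactorial_mul_geometric_of_norm_lt_one k
    (r := |x|) (by rwa [norm_abs_eq_norm])).mul_left M) fun n ↦ ?_
  rw [Real.norm_eq_abs, abs_mul, abs_mul, abs_pow, Nat.abs_cast, ← mul_assoc]
  gcongr
  exact hc _

lemma hasSum_iterDerivSeries (hc : ∀ n, |c n| ≤ M) (k : ℕ) (hx : |x| < 1) :
    HasSum (fun n ↦ c (n + k) * (n + k).descFactorial k * x ^ n) (iterDerivSeries c k x) :=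
  (summable_iterDerivSeries hc k hx).hasSum

lemma succ_mul_descFactorial_coeff (c : ℕ → ℝ) (n k : ℕ) :
    ((n + 1 : ℕ) : ℝ) * (c (n + 1 + k) * (n + 1 + k).descFactorial k) =
      c (n + (k + 1)) * (n + (k + 1)).descFactorial (k + 1) := by
  rw [Nat.descFactorial_succ, show n + (k + 1) = n + 1 + k by omega, Nat.add_sub_cancel]
  push_cast
  ring

lemma hasSum_deriv_terms_iterDerivSeries (hc : ∀ n, |c n| ≤ M) (k : ℕ) (hx : |x| < 1) :
    HasSum (fun n : ℕ ↦ n * (c (n + k) * (n + k).descFactorial k) * x ^ (n - 1))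
      (iterDerivSeries c (k + 1) x) := by
  rw [← hasSum_nat_add_iff' 1]
  simp only [Finset.sum_range_one, Nat.cast_zero, zero_mul, sub_zero, Nat.add_sub_cancel]
  exact (hasSum_iterDerivSeries hc (k + 1) hx).congr_fun fun n ↦ by
    rw [← succ_mul_descFactorial_coeff]

lemma hasSum_mul_iterDerivSeries_succ (hc : ∀ n, |c n| ≤ M) (k : ℕ) (hx : |x| < 1) :
    HasSum (fun n : ℕ ↦ n * (c (n + k) * (n + k).descFactorial k * x ^ n))
      (x * iterDerivSeries c (k + 1) x) := by
  rw [← hasSum_nat_add_iff' 1]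
  simp only [Finset.sum_range_one, Nat.cast_zero, zero_mul, sub_zero]
  refine ((hasSum_iterDerivSeries hc (k + 1) hx).mul_left x).congr_fun fun n ↦ ?_
  rw [← succ_mul_descFactorial_coeff, pow_succ]
  ring

lemma hasDerivAt_iterDerivSeries (hc : ∀ n, |c n| ≤ M) (k : ℕ) (hx : |x| < 1) :
    HasDerivAt (iterDerivSeries c k) (iterDerivSeries c (k + 1) x) x := by
  set s := (|x| + 1) / 2 with hs
  have hxs : x ∈ Ioo (-s) s := abs_lt.1 (by linarith)
  have hs1 : |s| < 1 := by rw [abs_lt]; constructor <;> linarith [abs_nonneg x]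
  have hbound := hasSum_deriv_terms_iterDerivSeries (c := fun _ ↦ M) (fun _ ↦ le_refl |M|) k hs1
  have hderiv := hasDerivAt_tsum_of_isPreconnected hbound.summable isOpen_Ioo isPreconnected_Ioo
    (g := fun n z ↦ c (n + k) * (n + k).descFactorial k * z ^ n)
    (g' := fun n z ↦ n * (c (n + k) * (n + k).descFactorial k) * z ^ (n - 1))
    (fun n y _ ↦ ?_) (fun n y hy ↦ ?_) hxs (summable_iterDerivSeries hc k hx) hxs
  · rwa [(hasSum_deriv_terms_iterDerivSeries hc k hx).tsum_eq] at hderiv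
  · simpa [mul_comm, mul_left_comm, mul_assoc] using
      (hasDerivAt_pow n y).const_mul (c (n + k) * (n + k).descFactorial k)
  · have hys : |y| ≤ s := abs_le.2 ⟨hy.1.le, hy.2.le⟩
    have hM : 0 ≤ M := (abs_nonneg _).trans (hc 0)
    rw [Real.norm_eq_abs, abs_mul, abs_mul, abs_mul, abs_pow, Nat.abs_cast, Nat.abs_cast]
    gcongr
    exact hc _

end PowerSeries

section Convexity

variable {c : ℕ → ℝ} {M p : ℝ}

lemma hasSum_mul_iterDerivSeries_two_add_one (hc : ∀ n, |c n| ≤ M) {y : ℝ} (hy : |y| < 1) :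
    HasSum (fun n : ℕ ↦ (n + 1) * (p * (n + 1) - 1) * c (n + 1) * y ^ n)
      (p * y * iterDerivSeries c 2 y + (p - 1) * iterDerivSeries c 1 y) := by
  have h := ((hasSum_mul_iterDerivSeries_succ hc 1 hy).mul_left p).add
    ((hasSum_iterDerivSeries hc 1 hy).mul_left (p - 1))
  rw [← mul_assoc] at h
  refine h.congr_fun fun n ↦ ?_
  simp only [Nat.descFactorial_one]
  push_cast
  ring

lemma hasSum_iterDerivSeries_two (hc : ∀ n, |c n| ≤ M) {y : ℝ} (hy : |y| < 1) :
    HasSum (fun n : ℕ ↦ (n + 2) * (n + 1) * c (n + 2) * y ^ n) (iterDerivSeries c 2 y) := by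
  refine (hasSum_iterDerivSeries hc 2 hy).congr_fun fun n ↦ ?_
  simp only [Nat.descFactorial_succ, Nat.descFactorial_zero]
  push_cast
  ring

lemma iterDerivSeries_deriv2_factor_pos (hc : ∀ n, |c n| ≤ M) (hc0 : ∀ n, 0 ≤ c n)
    (hp : 1 < p) (htail : ∀ n : ℕ, 3 ≤ n → p * (n + 1) * c (n + 1) ≤ (p * n - 1) * c n)
    (hhead : 3 * p * c 3 < (p - 1) * (c 1 + c 2)) {x : ℝ} (hx : x ∈ Ioo 0 1) :
    0 < p * x * (iterDerivSeries c 2 x - iterDerivSeries c 2 (1 - x)) +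
      (p - 1) * (iterDerivSeries c 1 x + iterDerivSeries c 1 (1 - x)) := by
  obtain ⟨hxabs, huabs⟩ := abs_lt_one_of_mem_Ioo hx
  have hlow : ∑ n ∈ Finset.range 3, (n + 1) * (p * (n + 1) - 1) * c (n + 1) * x ^ n ≤
      p * x * iterDerivSeries c 2 x + (p - 1) * iterDerivSeries c 1 x := by
    refine sum_le_hasSum _ (fun n _ ↦ ?_) (hasSum_mul_iterDerivSeries_two_add_one hc hxabs)
    have : 0 ≤ p * (n + 1) - 1 := by nlinarith
    have := hc0 (n + 1)
    have := hx.1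
    positivity
  have hlow' : ∑ n ∈ Finset.range 2, ((n + 1) * (p * (n + 1) - 1) * c (n + 1) * (1 - x) ^ n -
        p * ((n + 2) * (n + 1) * c (n + 2) * (1 - x) ^ n)) ≤
      p * (1 - x) * iterDerivSeries c 2 (1 - x) + (p - 1) * iterDerivSeries c 1 (1 - x) -
        p * iterDerivSeries c 2 (1 - x) := by
    refine sum_le_hasSum _ (fun n hn ↦ ?_) ((hasSum_mul_iterDerivSeries_two_add_one hc huabs).sub
      ((hasSum_iterDerivSeries_two hc huabs).mul_left p))
    have h := htail (n + 1) (by rw [Finset.mem_range] at hn; omega)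
    push_cast at h
    have : 0 ≤ (1 - x) ^ n := pow_nonneg (by linarith [hx.2]) n
    nlinarith [mul_nonneg (n.cast_add_one_pos (α := ℝ)).le (mul_nonneg this (sub_nonneg.2 h))]
  simp only [Finset.sum_range_succ, Finset.sum_range_zero] at hlow hlow'
  norm_num at hlow hlow'
  have h3 := hc0 3
  have h3x : 0 ≤ p * c 3 * x := by have := hx.1; positivity
  have h3x' : 0 ≤ (3 * p - 1) * c 3 * x ^ 2 :=
    mul_nonneg (mul_nonneg (by linarith) h3) (sq_nonneg x)
  linarith

theorem strictConvexOn_iterDerivSeries_rpow_sub (hc : ∀ n, |c n| ≤ M) (hc0 : ∀ n, 0 ≤ c n)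
    (hp : 1 < p) (htail : ∀ n : ℕ, 3 ≤ n → p * (n + 1) * c (n + 1) ≤ (p * n - 1) * c n)
    (hhead : 3 * p * c 3 < (p - 1) * (c 1 + c 2)) :
    StrictConvexOn ℝ (Ioo 0 1)
      fun r ↦ iterDerivSeries c 0 (r ^ p) - iterDerivSeries c 0 (1 - r ^ p) := by
  set S := iterDerivSeries c
  have hderiv : ∀ k, ∀ s ∈ Ioo (0 : ℝ) 1,
      HasDerivAt (fun r ↦ S k (r ^ p)) (S (k + 1) (s ^ p) * (p * s ^ (p - 1))) s ∧
      HasDerivAt (fun r ↦ S k (1 - r ^ p)) (S (k + 1) (1 - s ^ p) * -(p * s ^ (p - 1))) s := by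
    intro k s hs
    have hrpow := hasDerivAt_rpow_const (x := s) (p := p) (Or.inl hs.1.ne')
    have hx := abs_lt_one_of_mem_Ioo (rpow_mem_Ioo_zero_one (by linarith : 0 < p) hs)
    have h₁ := (hasDerivAt_iterDerivSeries hc k hx.1).comp s hrpow
    have h₂ := (hasDerivAt_iterDerivSeries hc k hx.2).comp s (hrpow.const_sub 1)
    exact ⟨h₁, h₂⟩
  refine strictConvexOn_of_hasDerivAt2_pos (convex_Ioo 0 1) isOpen_Ioo
    (f' := fun s ↦ p * s ^ (p - 1) * (S 1 (s ^ p) + S 1 (1 - s ^ p)))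
    (f'' := fun s ↦ p * s ^ (p - 2) *
      (p * s ^ p * (S 2 (s ^ p) - S 2 (1 - s ^ p)) + (p - 1) * (S 1 (s ^ p) + S 1 (1 - s ^ p))))
    (fun s hs ↦ ?_) (fun s hs ↦ ?_) fun s hs ↦ ?_
  · refine ((hderiv 0 s hs).1.sub (hderiv 0 s hs).2).congr_deriv ?_
    ring
  · have hpow : s ^ (p - 1) * s ^ (p - 1) = s ^ (p - 2) * s ^ p := by
      rw [← rpow_add hs.1, ← rpow_add hs.1]
      congr 1
      ring
    refine (((hasDerivAt_rpow_const (Or.inl hs.1.ne')).const_mul p).mul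
      ((hderiv 1 s hs).1.add (hderiv 1 s hs).2)).congr_deriv ?_
    simp only [Pi.add_apply, show p - 1 - 1 = p - 2 by ring]
    linear_combination p * p * (S 2 (s ^ p) - S 2 (1 - s ^ p)) * hpow
  · exact mul_pos (mul_pos (by linarith) (rpow_pos_of_pos hs.1 _))
      (iterDerivSeries_deriv2_factor_pos hc hc0 hp htail hhead
        (rpow_mem_Ioo_zero_one (by linarith) hs))

end Convexity

section Hypergeometric

noncomputable def hypCoeff (a b c : ℝ) (n : ℕ) : ℝ :=
  (ascPochhammer ℝ n).eval a * (ascPochhammer ℝ n).eval b /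
    ((ascPochhammer ℝ n).eval c * (n.factorial : ℝ))

variable {a b c : ℝ}

lemma hypF_eq_iterDerivSeries (a b c z : ℝ) :
    hypF a b c z = iterDerivSeries (hypCoeff a b c) 0 z := by
  rw [iterDerivSeries_zero]
  rfl

lemma hypCoeff_zero : hypCoeff a b c 0 = 1 := by
  simp [hypCoeff]

lemma hypCoeff_succ (n : ℕ) :
    hypCoeff a b c (n + 1) = hypCoeff a b c n * ((a + n) * (b + n) / ((c + n) * (n + 1))) := by
  simp only [hypCoeff, ascPochhammer_succ_eval, Nat.factorial_succ]
  rw [div_mul_div_comm]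
  congr 1 <;> push_cast <;> ring

lemma hypCoeff_pos (ha : 0 < a) (hb : 0 < b) (hc : 0 < c) (n : ℕ) : 0 < hypCoeff a b c n := by
  have := ascPochhammer_pos n a ha
  have := ascPochhammer_pos n b hb
  have := ascPochhammer_pos n c hc
  unfold hypCoeff
  positivity

lemma hypCoeff_mem_Icc (ha : 0 ≤ a) (ha1 : a ≤ 1) (hb : 0 ≤ b) (hbc : b ≤ c) (n : ℕ) :
    hypCoeff a b c n ∈ Icc 0 1 := by
  induction n with
  | zero => simp [hypCoeff_zero]
  | succ n ih =>
    rw [hypCoeff_succ]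
    have hc : 0 ≤ c + n := by linarith [n.cast_nonneg (α := ℝ)]
    have hle : (a + n) * (b + n) ≤ (c + n) * (n + 1) := by
      rw [mul_comm (c + n)]
      exact mul_le_mul (by linarith) (by linarith) (by positivity) (by positivity)
    have hratio : (a + n) * (b + n) / ((c + n) * (n + 1)) ∈ Icc 0 1 :=
      ⟨by positivity, div_le_one_of_le₀ hle (by positivity)⟩
    exact ⟨mul_nonneg ih.1 hratio.1, mul_le_one₀ ih.2 hratio.1 hratio.2⟩

lemma abs_hypCoeff_le_one (ha : 0 ≤ a) (ha1 : a ≤ 1) (hb : 0 ≤ b) (hbc : b ≤ c) (n : ℕ) :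
    |hypCoeff a b c n| ≤ 1 := by
  obtain ⟨h0, h1⟩ := hypCoeff_mem_Icc ha ha1 hb hbc n
  rwa [abs_of_nonneg h0]

lemma ascPochhammer_succ_eval_left (n : ℕ) (x : ℝ) :
    (ascPochhammer ℝ (n + 1)).eval x = x * (ascPochhammer ℝ n).eval (x + 1) := by
  simp [ascPochhammer_succ_left, Polynomial.eval_comp]

lemma hypCoeff_contiguous (ha : 0 < a) (hb : 0 < b) (n : ℕ) :
    hypCoeff a (b - 1) (a + b) (n + 1) =
      b / (a + b) * hypCoeff a b (a + b + 1) n + hypCoeff a b (a + b) (n + 1) -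
        hypCoeff a b (a + b) n := by
  have hab : 0 < a + b := by positivity
  have hshift : (ascPochhammer ℝ n).eval (a + b + 1) =
      (ascPochhammer ℝ n).eval (a + b) * (a + b + n) / (a + b) := by
    rw [eq_div_iff hab.ne', ← ascPochhammer_succ_eval, ascPochhammer_succ_eval_left, mul_comm]
  have := ascPochhammer_pos n (a + b) hab
  have : (0 : ℝ) < n.factorial := by exact_mod_cast n.factorial_pos
  simp only [hypCoeff, ascPochhammer_succ_eval, ascPochhammer_succ_eval_left (x := b - 1),
    sub_add_cancel, Nat.factorial_succ, hshift]
  field_simp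
  push_cast
  ring

lemma hasSum_hypF {M : ℝ} (hc : ∀ n, |hypCoeff a b c n| ≤ M) {z : ℝ} (hz : |z| < 1) :
    HasSum (fun n ↦ hypCoeff a b c n * z ^ n) (hypF a b c z) := by
  simpa [hypF_eq_iterDerivSeries] using hasSum_iterDerivSeries hc 0 hz

theorem hypF_sub_one_sub_mul_hypF (ha : 0 < a) (ha1 : a ≤ 1) (hb : 0 < b) {z : ℝ}
    (hz : |z| < 1) :
    hypF a (b - 1) (a + b) z - (1 - z) * hypF a b (a + b) z =
      b / (a + b) * z * hypF a b (a + b + 1) z := by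
  have hF := hasSum_hypF (abs_hypCoeff_le_one (c := a + b) ha.le ha1 hb.le (by linarith)) hz
  have hG := hasSum_hypF (abs_hypCoeff_le_one (c := a + b + 1) ha.le ha1 hb.le (by linarith)) hz
  have hF' := (hasSum_nat_add_iff' 1).2 hF
  rw [Finset.sum_range_one, hypCoeff_zero, pow_zero, mul_one] at hF'
  have hshift : HasSum (fun n ↦ hypCoeff a (b - 1) (a + b) (n + 1) * z ^ (n + 1))
      (b / (a + b) * z * hypF a b (a + b + 1) z + (hypF a b (a + b) z - 1) -
        z * hypF a b (a + b) z) := by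
    refine (((hG.mul_left (b / (a + b) * z)).add hF').sub (hF.mul_left z)).congr_fun fun n ↦ ?_
    rw [hypCoeff_contiguous ha hb, pow_succ]
    ring
  have h := (hasSum_nat_add_iff (f := fun n ↦ hypCoeff a (b - 1) (a + b) n * z ^ n) 1).1 hshift
  rw [Finset.sum_range_one, hypCoeff_zero, pow_zero, mul_one] at h
  rw [show hypF a (b - 1) (a + b) z = _ from h.tsum_eq]
  ring

lemma hypF_contiguous_div (ha : 0 < a) (ha1 : a ≤ 1) (hb : 0 < b) (K : ℝ) {z w : ℝ}
    (hz : z ∈ Ioo 0 1) (hw : 1 - z = w) :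
    (K * hypF a (b - 1) (a + b) z - w * (K * hypF a b (a + b) z)) / z =
      K * (b / (a + b)) * hypF a b (a + b + 1) z := by
  subst hw
  rw [div_eq_iff hz.1.ne']
  linear_combination K * hypF_sub_one_sub_mul_hypF ha ha1 hb (abs_lt_one_of_mem_Ioo hz).1

variable {p : ℝ}

lemma succ_mul_hypCoeff_succ_le (ha : 0 < a) (hb : 0 < b) (hp : 0 < p) (hpb : p * b = p - 1)
    (hab : a + 1 ≤ 3 * b + b ^ 2) (n : ℕ) (hn : 3 ≤ n) :
    p * (n + 1) * hypCoeff a b (a + b + 1) (n + 1) ≤ (p * n - 1) * hypCoeff a b (a + b + 1) n := by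
  set C := hypCoeff a b (a + b + 1) n
  have hn' : (3 : ℝ) ≤ n := by exact_mod_cast hn
  have hC := (hypCoeff_pos (c := a + b + 1) ha hb (by positivity) n).le
  have hden : 0 < a + b + 1 + n := by positivity
  rw [hypCoeff_succ]
  calc p * (n + 1) * (C * ((a + n) * (b + n) / ((a + b + 1 + n) * (n + 1))))
      = C * p * ((a + n) * (b + n) / (a + b + 1 + n)) := by field_simp
    _ ≤ C * p * (n - 1 + b) := by
        gcongr
        rw [div_le_iff₀ hden]
        nlinarith
    _ = (p * n - 1) * C := by linear_combination C * hpb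

lemma three_mul_hypCoeff_three_lt (ha : 0 < a) (hb : 0 < b) (hp : 0 < p) (hpb : p * b = p - 1)
    (heps : (a + 1) * (a + 2) * ((b + 1) * (b + 2)) <
      b * (a + b + 3) * (2 * (a + b + 2) + (a + 1) * (b + 1))) :
    3 * p * hypCoeff a b (a + b + 1) 3 <
      (p - 1) * (hypCoeff a b (a + b + 1) 1 + hypCoeff a b (a + b + 1) 2) := by
  set C := hypCoeff a b (a + b + 1) 1
  have hC := hypCoeff_pos (c := a + b + 1) ha hb (by positivity) 1
  have h2 : hypCoeff a b (a + b + 1) 2 = C * ((a + 1) * (b + 1) / ((a + b + 2) * 2)) := by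
    rw [hypCoeff_succ 1]; push_cast; ring
  have h3 : hypCoeff a b (a + b + 1) 3 =
      hypCoeff a b (a + b + 1) 2 * ((a + 2) * (b + 2) / ((a + b + 3) * 3)) := by
    rw [hypCoeff_succ 2]; push_cast; ring
  have hkey : (p - 1) * (C + hypCoeff a b (a + b + 1) 2) - 3 * p * hypCoeff a b (a + b + 1) 3 =
      p * C / (2 * (a + b + 2) * (a + b + 3)) *
        (b * (a + b + 3) * (2 * (a + b + 2) + (a + 1) * (b + 1)) -
          (a + 1) * (a + 2) * ((b + 1) * (b + 2))) := by
    rw [← hpb, h3, h2]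
    field_simp
  have : 0 < p * C / (2 * (a + b + 2) * (a + b + 3)) := by positivity
  nlinarith

theorem strictConvexOn_hypF_rpow_sub (ha : 0 < a) (ha1 : a ≤ 1) (hb : 0 < b) (hp : 1 < p)
    (hpb : p * b = p - 1) (hab : a + 1 ≤ 3 * b + b ^ 2)
    (heps : (a + 1) * (a + 2) * ((b + 1) * (b + 2)) <
      b * (a + b + 3) * (2 * (a + b + 2) + (a + 1) * (b + 1))) :
    StrictConvexOn ℝ (Ioo 0 1)
      fun r ↦ hypF a b (a + b + 1) (r ^ p) - hypF a b (a + b + 1) (1 - r ^ p) := by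
  simp only [hypF_eq_iterDerivSeries]
  exact strictConvexOn_iterDerivSeries_rpow_sub
    (abs_hypCoeff_le_one ha.le ha1 hb.le (by linarith))
    (fun n ↦ (hypCoeff_pos ha hb (by positivity) n).le) hp
    (succ_mul_hypCoeff_succ_le ha hb (by linarith) hpb hab)
    (three_mul_hypCoeff_three_lt ha hb (by linarith) hpb heps)

end Hypergeometric

lemma piGen_pos {p q : ℝ} (hp : 1 < p) (hq : 0 < q) : 0 < piGen p q := by
  have h1p : 1 / p < 1 := by rw [div_lt_one (by linarith)]; exact hp
  have := Gamma_pos_of_pos (show 0 < 1 - 1 / p by linarith)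
  have := Gamma_pos_of_pos (show 0 < 1 / q by positivity)
  have := Gamma_pos_of_pos (show 0 < 1 - 1 / p + 1 / q by positivity)
  unfold piGen
  positivity

lemma DeltaGen_eq {p q r : ℝ} (hp : 1 < p) (hq : 1 < q) (hr : r ∈ Ioo 0 1) :
    DeltaGen p q r = piGen p q / 2 * ((1 - 1 / p) / (1 / q + (1 - 1 / p))) *
      (hypF (1 / q) (1 - 1 / p) (1 / q + (1 - 1 / p) + 1) (r ^ p) -
        hypF (1 / q) (1 - 1 / p) (1 / q + (1 - 1 / p) + 1) (1 - r ^ p)) := by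
  have hp0 : 0 < p := by linarith
  have ha : 0 < 1 / q := by positivity
  have ha1 : 1 / q ≤ 1 := by rw [div_le_one (by linarith)]; exact hq.le
  have hb : 0 < 1 - 1 / p := by rw [sub_pos, div_lt_one hp0]; exact hp
  have hx := rpow_mem_Ioo_zero_one hp0 hr
  have hu : 1 - r ^ p ∈ Ioo 0 1 := ⟨by linarith [hx.2], by linarith [hx.1]⟩
  have hr' : ((1 - r ^ p) ^ (1 / p)) ^ p = 1 - r ^ p := by
    rw [← rpow_mul hu.1.le, one_div, inv_mul_cancel₀ hp0.ne', rpow_one]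
  simp only [DeltaGen, Egen, Kgen, hr', show -(1 / p) = 1 - 1 / p - 1 by ring,
    show 1 - 1 / p + 1 / q = 1 / q + (1 - 1 / p) by ring]
  rw [hypF_contiguous_div ha ha1 hb _ hx rfl,
    hypF_contiguous_div ha ha1 hb _ hu (sub_sub_cancel _ _)]
  ring

theorem stmt8_general (p q : ℝ) (hp : 1 < p) (hq : 1 < q)
    (h1' : 5/p + 1/q < 3 + 1/p^2)
    (h2 : 0 < 20 - 42/p + 6/q + 21/p^2 - 2/q^2 - 20/(p*q) + 9/(p^2*q) - 3/p^3 - 1/(p^3*q)) :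
    StrictConvexOn ℝ (Set.Ioo (0:ℝ) 1) (DeltaGen p q) := by
  have hp0 : 0 < p := by linarith
  have hb : 0 < 1 - 1 / p := by rw [sub_pos, div_lt_one hp0]; exact hp
  have hconv := strictConvexOn_hypF_rpow_sub (a := 1 / q) (by positivity)
    (by rw [div_le_one (by linarith)]; exact hq.le) hb hp (by field_simp)
    (sub_nonneg.1 ((sub_pos.2 h1').le.trans_eq (by ring))) (sub_pos.1 (h2.trans_eq (by ring)))
  have hC : 0 < piGen p q / 2 * ((1 - 1 / p) / (1 / q + (1 - 1 / p))) := by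
    have := piGen_pos hp (by linarith : 0 < q)
    positivity
  exact (hconv.const_mul hC).congr fun r hr ↦ (DeltaGen_eq hp hq hr).symm

theorem stmt8 (p q : ℝ) (hp : 1 < p) (hq : 1 < q)
    (h1 : 2 + 1/p + 1/p^2 ≤ 5/p + 1/q) (h1' : 5/p + 1/q < 3 + 1/p^2)
    (h2 : 0 < 20 - 42/p + 6/q + 21/p^2 - 2/q^2 - 20/(p*q) + 9/(p^2*q) - 3/p^3 - 1/(p^3*q)) :
    StrictConvexOn ℝ (Set.Ioo (0:ℝ) 1) (DeltaGen p q) :=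
  stmt8_general p q hp hq h1' h2
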